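/- Let $\tau^2 > 0$, $\sigma^2 > 0$, $\alpha > 1$, and suppose the sequence satisfies the two-sided bound $c\, n i^{-\alpha} \le \lambda_i^{(n)} \le C n i^{-\alpha}$ for all $1 \le i \le n$ with constants $0 < c \le C$. With $b_{ni} = \lambda_i^{(n)}/(\tau^2 + \sigma^2 \lambda_i^{(n)})$, there exist constants $0 < c_1 \le c_2$ such that $c_1 n^{1/\alpha} \le \sum_{i=1}^n b_{ni}^2 \le c_2 n^{1/\alpha}$ and $c_1 n^{1/\alpha} \le \sum_{i=1}^n b_{ni} \le c_2 n^{1/\alpha}$ for all sufficiently large $n$. -/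

import Mathlib

open Finset Filter Real

/-! For `i ≤ n^{1/α}` the eigenvalue bound gives `λᵢ ≥ c`, so about `n^{1/α}` of the ratios
`bᵢ = λᵢ / (τ² + σ²λᵢ)` are at least `c / (τ² + σ²c)`. Conversely `bᵢ ≤ min (1/σ²) (λᵢ/τ²)`:
splitting the sum at `m = ⌈n^{1/α}⌉`, the first `m` terms contribute at most `m/σ²`, and the
tail at most `(Cn/τ²) ∑_{i>m} i^{-α} ≤ (Cn/τ²) m^{1-α}/(α-1) ≤ Cm/(τ²(α-1))`, by comparison
with `∫_m^∞ t^{-α} dt` and `n ≤ m^α`. The squares behave alike because `bᵢ² ≤ bᵢ/σ²`. -/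

lemma sum_Ioc_rpow_neg_le {α : ℝ} (hα : 1 < α) {m : ℕ} (hm : 0 < m) (n : ℕ) :
    ∑ i ∈ Ioc m n, (i : ℝ) ^ (-α) ≤ (m : ℝ) ^ (1 - α) / (α - 1) := by
  have hm' : (0 : ℝ) < m := by exact_mod_cast hm
  have anti : AntitoneOn (fun x : ℝ ↦ x ^ (-α)) (Set.Icc m n) :=
    (antitoneOn_rpow_Ioi_of_exponent_nonpos (by linarith)).mono fun x hx ↦ hm'.trans_le hx.1
  have := anti.sum_Ico_le_integral (integrableOn_Ioi_rpow_of_lt (by linarith) hm')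
    fun t ht ↦ rpow_nonneg (hm'.trans ht).le _
  rwa [sum_Ico_add' (fun i : ℕ ↦ (i : ℝ) ^ (-α)), Ico_add_one_add_one_eq_Ioc,
    integral_Ioi_rpow_of_lt (by linarith) hm', neg_div, ← div_neg, neg_add', neg_neg,
    neg_add_eq_sub] at this

lemma half_le_floor {u : ℝ} (hu : 1 ≤ u) : u / 2 ≤ ⌊u⌋₊ := by
  have : (1 : ℝ) ≤ ⌊u⌋₊ := by exact_mod_cast (Nat.one_le_floor_iff u).mpr hu
  linarith [Nat.lt_floor_add_one u]

lemma ceil_le_two_mul {u : ℝ} (hu : 1 ≤ u) : (⌈u⌉₊ : ℝ) ≤ 2 * u := by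
  linarith [Nat.ceil_lt_add_one (zero_le_one.trans hu)]

section SumBounds

variable {α : ℝ} {n : ℕ} {f : ℕ → ℝ}

lemma half_mul_rpow_one_div_le_sum_Icc (hα : 1 ≤ α) (hn : 1 ≤ n) {b : ℝ} (hb : 0 ≤ b)
    (hf0 : ∀ i ∈ Icc 1 n, 0 ≤ f i) (hfb : ∀ i ∈ Icc 1 n, (i : ℝ) ^ α ≤ n → b ≤ f i) :
    b / 2 * (n : ℝ) ^ (1 / α) ≤ ∑ i ∈ Icc 1 n, f i := by
  have huα : ((n : ℝ) ^ (1 / α)) ^ α = n := by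
    rw [one_div, rpow_inv_rpow (Nat.cast_nonneg n) (by positivity)]
  set u := (n : ℝ) ^ (1 / α)
  have hn' : (1 : ℝ) ≤ n := by exact_mod_cast hn
  have hu1 : 1 ≤ u := one_le_rpow hn' (by positivity)
  have hmn : ⌊u⌋₊ ≤ n := Nat.floor_le_of_le <|
    rpow_le_self_of_one_le hn' ((div_le_one (by positivity)).mpr hα)
  have hb_le : ∀ i ∈ Icc 1 ⌊u⌋₊, b ≤ f i := by
    intro i hi
    obtain ⟨hi1, hiu⟩ := mem_Icc.mp hi
    refine hfb i (mem_Icc.mpr ⟨hi1, hiu.trans hmn⟩) ?_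
    calc (i : ℝ) ^ α ≤ u ^ α :=
          rpow_le_rpow (Nat.cast_nonneg i) ((Nat.le_floor_iff (by positivity)).mp hiu) (by positivity)
      _ = n := huα
  calc b / 2 * u = b * (u / 2) := by ring
    _ ≤ b * ⌊u⌋₊ := mul_le_mul_of_nonneg_left (half_le_floor hu1) hb
    _ ≤ ∑ i ∈ Icc 1 ⌊u⌋₊, f i := by simpa [mul_comm] using card_nsmul_le_sum _ _ _ hb_le
    _ ≤ ∑ i ∈ Icc 1 n, f i :=
        sum_le_sum_of_subset_of_nonneg (Icc_subset_Icc_right hmn) fun i hi _ ↦ hf0 i hi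

lemma sum_Icc_le_mul_rpow_one_div (hα : 1 < α) (hn : 1 ≤ n) {A B : ℝ} (hA : 0 ≤ A) (hB : 0 ≤ B)
    (hfA : ∀ i ∈ Icc 1 n, f i ≤ A) (hfB : ∀ i ∈ Icc 1 n, f i ≤ B * n * (i : ℝ) ^ (-α)) :
    ∑ i ∈ Icc 1 n, f i ≤ 2 * (A + B / (α - 1)) * (n : ℝ) ^ (1 / α) := by
  have huα : ((n : ℝ) ^ (1 / α)) ^ α = n := by
    rw [one_div, rpow_inv_rpow (Nat.cast_nonneg n) (by positivity)]
  set u := (n : ℝ) ^ (1 / α)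
  have hn' : (1 : ℝ) ≤ n := by exact_mod_cast hn
  have hu1 : 1 ≤ u := one_le_rpow hn' (by positivity)
  set m := ⌈u⌉₊
  have hm : 0 < m := Nat.ceil_pos.mpr (by positivity)
  have hm' : (0 : ℝ) < m := by exact_mod_cast hm
  have hmn : m ≤ n := Nat.ceil_le.mpr <|
    rpow_le_self_of_one_le hn' ((div_le_one (by positivity)).mpr hα.le)
  have hnm : (n : ℝ) ≤ (m : ℝ) ^ α := by
    calc (n : ℝ) = u ^ α := huα.symm
      _ ≤ (m : ℝ) ^ α := rpow_le_rpow (by positivity) (Nat.le_ceil u) (by positivity)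
  have head : ∑ i ∈ Icc 1 m, f i ≤ m * A := by
    simpa using sum_le_card_nsmul _ _ _ fun i hi ↦ hfA i (Icc_subset_Icc_right hmn hi)
  have tail : ∑ i ∈ Ioc m n, f i ≤ B / (α - 1) * m := by
    calc ∑ i ∈ Ioc m n, f i ≤ ∑ i ∈ Ioc m n, B * n * (i : ℝ) ^ (-α) :=
          sum_le_sum fun i hi ↦ hfB i (by simp at hi ⊢; omega)
      _ = B * n * ∑ i ∈ Ioc m n, (i : ℝ) ^ (-α) := by rw [mul_sum]
      _ ≤ B * n * ((m : ℝ) ^ (1 - α) / (α - 1)) :=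
          mul_le_mul_of_nonneg_left (sum_Ioc_rpow_neg_le hα hm n) (by positivity)
      _ = B / (α - 1) * (n / (m : ℝ) ^ α * m) := by rw [rpow_sub hm', rpow_one]; field_simp
      _ ≤ B / (α - 1) * m := by
          have : (n : ℝ) / (m : ℝ) ^ α ≤ 1 := div_le_one_of_le₀ hnm (by positivity)
          gcongr
          exact mul_le_of_le_one_left hm'.le this
  have split : ∑ i ∈ Icc 1 n, f i = ∑ i ∈ Icc 1 m, f i + ∑ i ∈ Ioc m n, f i := by
    rw [← zero_add 1, Icc_add_one_left_eq_Ioc, Icc_add_one_left_eq_Ioc,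
      sum_Ioc_consecutive _ (Nat.zero_le m) hmn]
  calc ∑ i ∈ Icc 1 n, f i ≤ (A + B / (α - 1)) * m := by linarith
    _ ≤ (A + B / (α - 1)) * (2 * u) := by gcongr; exact ceil_le_two_mul hu1
    _ = 2 * (A + B / (α - 1)) * u := by ring

end SumBounds

section Ratio

variable {τ σ x y : ℝ}

lemma div_add_mul_self_le_inv (hτ : 0 ≤ τ) (hσ : 0 < σ) (hx : 0 ≤ x) :
    x / (τ + σ * x) ≤ σ⁻¹ := by
  rcases hx.eq_or_lt with rfl | hx
  · simp [hσ.le]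
  rw [div_le_iff₀ (by positivity)]
  field_simp
  linarith

lemma div_add_mul_self_le_div_of_le (hτ : 0 < τ) (hσ : 0 ≤ σ) (hx : 0 ≤ x) (hxy : x ≤ y) :
    x / (τ + σ * x) ≤ y / τ :=
  (div_le_div_of_nonneg_left hx hτ (le_add_of_nonneg_right (by positivity))).trans
    (div_le_div_of_nonneg_right hxy hτ.le)

lemma div_add_mul_self_le_div_add_mul_self (hτ : 0 < τ) (hσ : 0 ≤ σ) (hx : 0 ≤ x)
    (hxy : x ≤ y) : x / (τ + σ * x) ≤ y / (τ + σ * y) := by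
  have : 0 ≤ y := hx.trans hxy
  rw [div_le_div_iff₀ (by positivity) (by positivity)]
  nlinarith

end Ratio

lemma le_mul_mul_rpow_neg {c α x y : ℝ} (hc : 0 ≤ c) (hx : 0 < x) (hxy : x ^ α ≤ y) :
    c ≤ c * y * x ^ (-α) := by
  rw [rpow_neg hx.le, mul_assoc]
  exact le_mul_of_one_le_right hc (by rw [le_mul_inv_iff₀ (by positivity), one_mul]; exact hxy)

section Shrinkage

variable {τ σ c C α : ℝ} {n : ℕ} {x : ℕ → ℝ}

lemma rpow_bounds_div_add_mul_self (hτ : 0 < τ) (hσ : 0 < σ) (hc : 0 ≤ c)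
    (hlb : ∀ i ∈ Icc 1 n, c * n * (i : ℝ) ^ (-α) ≤ x i)
    (hub : ∀ i ∈ Icc 1 n, x i ≤ C * n * (i : ℝ) ^ (-α)) (i : ℕ) (hi : i ∈ Icc 1 n) :
    0 ≤ x i / (τ + σ * x i) ∧ x i / (τ + σ * x i) ≤ σ⁻¹ ∧
      x i / (τ + σ * x i) ≤ C / τ * n * (i : ℝ) ^ (-α) ∧
      ((i : ℝ) ^ α ≤ n → c / (τ + σ * c) ≤ x i / (τ + σ * x i)) := by
  have hx : 0 ≤ x i := (by positivity : 0 ≤ c * n * (i : ℝ) ^ (-α)).trans (hlb i hi)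
  refine ⟨by positivity, div_add_mul_self_le_inv hτ.le hσ hx,
    (div_add_mul_self_le_div_of_le hτ hσ.le hx (hub i hi)).trans_eq (by ring), fun hin ↦ ?_⟩
  have hi0 : (0 : ℝ) < i := by exact_mod_cast (mem_Icc.mp hi).1
  exact div_add_mul_self_le_div_add_mul_self hτ hσ.le hc <|
    (le_mul_mul_rpow_neg hc hi0 hin).trans (hlb i hi)

end Shrinkage

/-- under the two-sided eigenvalue bound `c n i^(-α) ≤ λᵢ ≤ C n i^(-α)`,
both `∑ bₙᵢ` and `∑ bₙᵢ²` are of exact order `n^(1/α)` for large `n`. -/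
theorem stmt3
    (τ2 σ2 α : ℝ) (hτ : 0 < τ2) (hσ : 0 < σ2) (hα : 1 < α)
    (lam : ℕ → ℕ → ℝ)
    (c C : ℝ) (hc : 0 < c) (hcC : c ≤ C)
    (hlb : ∀ (n i : ℕ), 1 ≤ i → i ≤ n → c * (n : ℝ) * (i : ℝ) ^ (-α) ≤ lam n i)
    (hub : ∀ n i, 1 ≤ i → i ≤ n → lam n i ≤ C * n * (i : ℝ) ^ (-α)) :
    ∃ c₁ c₂ : ℝ, 0 < c₁ ∧ c₁ ≤ c₂ ∧
      ∀ᶠ n : ℕ in atTop,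
        (c₁ * (n : ℝ) ^ (1 / α)
          ≤ ∑ i ∈ Finset.Icc 1 n, (lam n i / (τ2 + σ2 * lam n i)) ^ 2) ∧
        (∑ i ∈ Finset.Icc 1 n, (lam n i / (τ2 + σ2 * lam n i)) ^ 2
          ≤ c₂ * (n : ℝ) ^ (1 / α)) ∧
        (c₁ * (n : ℝ) ^ (1 / α)
          ≤ ∑ i ∈ Finset.Icc 1 n, lam n i / (τ2 + σ2 * lam n i)) ∧
        (∑ i ∈ Finset.Icc 1 n, lam n i / (τ2 + σ2 * lam n i)
          ≤ c₂ * (n : ℝ) ^ (1 / α)) := by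
  have hC : 0 ≤ C := hc.le.trans hcC
  set b₀ := c / (τ2 + σ2 * c)
  have hb₀ : 0 < b₀ := by positivity
  set c₁ := min b₀ (b₀ ^ 2) / 2
  set K₁ := 2 * (σ2⁻¹ + C / τ2 / (α - 1))
  set K₂ := 2 * (σ2⁻¹ ^ 2 + σ2⁻¹ * (C / τ2) / (α - 1))
  refine ⟨c₁, max c₁ (max K₁ K₂), by positivity, le_max_left _ _, ?_⟩
  filter_upwards [eventually_ge_atTop 1] with n hn
  have hb := rpow_bounds_div_add_mul_self (x := lam n) hτ hσ hc.le
    (fun i hi ↦ hlb n i (mem_Icc.1 hi).1 (mem_Icc.1 hi).2)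
    (fun i hi ↦ hub n i (mem_Icc.1 hi).1 (mem_Icc.1 hi).2)
  have hsq : ∀ i ∈ Icc 1 n,
      (lam n i / (τ2 + σ2 * lam n i)) ^ 2 ≤ σ2⁻¹ * (C / τ2) * n * (i : ℝ) ^ (-α) := by
    intro i hi
    obtain ⟨h0, hσ', hC', -⟩ := hb i hi
    simpa only [sq, mul_assoc] using mul_le_mul hσ' hC' h0 (by positivity)
  have sq_lo := half_mul_rpow_one_div_le_sum_Icc hα.le hn (b := b₀ ^ 2) (by positivity)
    (fun i _ ↦ sq_nonneg _) fun i hi hin ↦ pow_le_pow_left₀ hb₀.le ((hb i hi).2.2.2 hin) 2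
  have sq_hi := sum_Icc_le_mul_rpow_one_div hα hn (A := σ2⁻¹ ^ 2) (by positivity)
    (by positivity) (fun i hi ↦ pow_le_pow_left₀ (hb i hi).1 (hb i hi).2.1 2) hsq
  have lin_lo := half_mul_rpow_one_div_le_sum_Icc hα.le hn hb₀.le (fun i hi ↦ (hb i hi).1)
    fun i hi ↦ (hb i hi).2.2.2
  have lin_hi := sum_Icc_le_mul_rpow_one_div hα hn (A := σ2⁻¹) (by positivity)
    (by positivity : 0 ≤ C / τ2) (fun i hi ↦ (hb i hi).2.1) fun i hi ↦ (hb i hi).2.2.1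
  refine ⟨le_trans ?_ sq_lo, sq_hi.trans ?_, le_trans ?_ lin_lo, lin_hi.trans ?_⟩ <;> gcongr
  · exact div_le_div_of_nonneg_right (min_le_right _ _) zero_le_two
  · exact (le_max_right _ _).trans (le_max_right _ _)
  · exact div_le_div_of_nonneg_right (min_le_left _ _) zero_le_two
  · exact (le_max_left _ _).trans (le_max_right _ _)
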